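/- For every third-order tensor A : Fin n₁ → Fin n₂ → Fin n₃ → ℂ, the mode-2 multi-tubal rank is bounded by the ranks of the mode-1 and mode-3 matricizations: r₂(A) ≤ min( rank(A_(1)), rank(A_(3)) ). -/
import Mathlib


/-- The `l`-th mode-2 DFT slice of a third-order tensor. -/
noncomputable def mode2DftSlice {n₁ n₃ : ℕ} (n₂ : ℕ) (A : Fin n₁ → Fin n₂ → Fin n₃ → ℂ)
    (l : Fin n₂) : Matrix (Fin n₁) (Fin n₃) ℂ :=
  Matrix.of fun i k =>
    ∑ j : Fin n₂, Complex.exp (-2 * Real.pi * Complex.I * (l : ℕ) * (j : ℕ) / (n₂ : ℕ)) * A i j k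

/-- The mode-2 tubal rank `r₂(A)`. -/
noncomputable def mode2TubalRank {n₁ n₃ : ℕ} (n₂ : ℕ) (A : Fin n₁ → Fin n₂ → Fin n₃ → ℂ) : ℕ :=
  Finset.univ.sup fun l : Fin n₂ => (mode2DftSlice n₂ A l).rank

/-- The mode-1 matricization `A_(1)`. -/
def mat1 {n₁ n₂ n₃ : ℕ} (A : Fin n₁ → Fin n₂ → Fin n₃ → ℂ) :
    Matrix (Fin n₁) (Fin n₂ × Fin n₃) ℂ :=
  Matrix.of fun i jk => A i jk.1 jk.2

/-- The mode-3 matricization `A_(3)`. -/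
def mat3 {n₁ n₂ n₃ : ℕ} (A : Fin n₁ → Fin n₂ → Fin n₃ → ℂ) :
    Matrix (Fin n₃) (Fin n₁ × Fin n₂) ℂ :=
  Matrix.of fun k ij => A ij.1 ij.2 k

/-- The mode-2 multi-tubal rank is bounded by the ranks of the mode-1 and mode-3
matricizations: `r₂(A) ≤ min (rank A_(1)) (rank A_(3))`. -/
theorem mode2TubalRank_le (n₁ n₂ n₃ : ℕ) (A : Fin n₁ → Fin n₂ → Fin n₃ → ℂ) :
    mode2TubalRank n₂ A ≤ min (mat1 A).rank (mat3 A).rank := by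
  rw [le_min_iff]
  refine ⟨Finset.sup_le fun l _ => ?_, Finset.sup_le fun l _ => ?_⟩
  · have h : mode2DftSlice n₂ A l =
        (mat1 A) * (Matrix.of fun (jk : Fin n₂ × Fin n₃) (k : Fin n₃) =>
          if jk.2 = k then Complex.exp (-2 * Real.pi * Complex.I * (l : ℕ) * (jk.1 : ℕ) / (n₂ : ℕ)) else 0) := by
      ext i k
      simp only [mode2DftSlice, mat1, Matrix.mul_apply, Matrix.of_apply, Fintype.sum_prod_type,
        mul_ite, mul_zero, Finset.sum_ite_eq', Finset.mem_univ, if_true]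
      exact Finset.sum_congr rfl fun j _ => mul_comm _ _
    rw [h]
    exact Matrix.rank_mul_le_left _ _
  · have h : mode2DftSlice n₂ A l =
        (Matrix.of fun (i : Fin n₁) (ij : Fin n₁ × Fin n₂) =>
          if ij.1 = i then Complex.exp (-2 * Real.pi * Complex.I * (l : ℕ) * (ij.2 : ℕ) / (n₂ : ℕ)) else 0) *
          Matrix.transpose (mat3 A) := by
      ext i k
      simp only [mode2DftSlice, mat3, Matrix.mul_apply, Matrix.transpose_apply, Matrix.of_apply,
        Fintype.sum_prod_type, ite_mul, zero_mul, Finset.sum_ite_eq', Finset.mem_univ, if_true]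
      rw [Finset.sum_comm]
      simp [Finset.sum_ite_eq']
    calc (mode2DftSlice n₂ A l).rank ≤ (Matrix.transpose (mat3 A)).rank :=
          h ▸ Matrix.rank_mul_le_right _ _
      _ = (mat3 A).rank := Matrix.rank_transpose _
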